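/- Let u : ℝ³ → ℝ be smooth in the variables (x,y,t). The operators L₁ and L₂ commute, i.e. L₁(L₂ f) = L₂(L₁ f) for every smooth function f : ℝ⁴ → ℝ of (x,y,t,λ) and every (x,y,t,λ) ∈ ℝ⁴, if and only if u satisfies the dispersionless Einstein–Weyl equation ∂_x∂_y(u²) + ∂_y∂_y u + 2 ∂_x∂_t u = 0 identically on ℝ³. -/

import Mathlib

/-- The first Lax operator `L₁ f = ∂_y f − λ ∂_x f + 2 (∂_x u) λ ∂_λ f`. -/
noncomputable def L1 (u : ℝ → ℝ → ℝ → ℝ) (f : ℝ → ℝ → ℝ → ℝ → ℝ) :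
    ℝ → ℝ → ℝ → ℝ → ℝ := fun x y t l =>
  deriv (fun y' => f x y' t l) y - l * deriv (fun x' => f x' y t l) x
    + 2 * (deriv (fun x' => u x' y t) x) * l * deriv (fun l' => f x y t l') l

/-- The second Lax operator
`L₂ f = ∂_t f + (λ²/2 + u λ) ∂_x f − ((∂_x u) λ + ∂_y u + 2 u ∂_x u) λ ∂_λ f`. -/
noncomputable def L2 (u : ℝ → ℝ → ℝ → ℝ) (f : ℝ → ℝ → ℝ → ℝ → ℝ) :
    ℝ → ℝ → ℝ → ℝ → ℝ := fun x y t l =>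
  deriv (fun t' => f x y t' l) t
    + (l ^ 2 / 2 + u x y t * l) * deriv (fun x' => f x' y t l) x
    - ((deriv (fun x' => u x' y t) x) * l + deriv (fun y' => u x y' t) y
        + 2 * u x y t * (deriv (fun x' => u x' y t) x)) * l
      * deriv (fun l' => f x y t l') l

abbrev E4 := ℝ × ℝ × ℝ × ℝ

noncomputable def pd (v : E4) (g : E4 → ℝ) : E4 → ℝ := fun p => fderiv ℝ g p v

theorem pd_smooth {g : E4 → ℝ} (hg : ContDiff ℝ (⊤ : ℕ∞) g) (v : E4) : ContDiff ℝ (⊤ : ℕ∞) (pd v g) :=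
  (hg.fderiv_right le_rfl).clm_apply contDiff_const

theorem pd_comm {g : E4 → ℝ} (hg : ContDiff ℝ (⊤ : ℕ∞) g) (v w : E4) (p : E4) :
    pd v (pd w g) p = pd w (pd v g) p := by
  have h1 : ∀ q, HasFDerivAt g (fderiv ℝ g q) q := fun q =>
    (hg.differentiable (by simp)).differentiableAt.hasFDerivAt
  have h2 : HasFDerivAt (fderiv ℝ g) (fderiv ℝ (fderiv ℝ g) p) p :=
    ((hg.fderiv_right (m := (⊤ : ℕ∞)) le_rfl).differentiable (by simp)).differentiableAt.hasFDerivAt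
  have hs := second_derivative_symmetric h1 h2 v w
  have e1 : pd v (pd w g) p = (fderiv ℝ (fderiv ℝ g) p v) w := by
    unfold pd
    rw [fderiv_clm_apply ((hg.fderiv_right (m := (⊤ : ℕ∞)) le_rfl).differentiable (by simp)).differentiableAt
      (differentiableAt_const w)]
    simp
  have e2 : pd w (pd v g) p = (fderiv ℝ (fderiv ℝ g) p w) v := by
    unfold pd
    rw [fderiv_clm_apply ((hg.fderiv_right (m := (⊤ : ℕ∞)) le_rfl).differentiable (by simp)).differentiableAt
      (differentiableAt_const v)]
    simp
  rw [e1, e2, hs]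

theorem pd_add {a b : E4 → ℝ} (ha : Differentiable ℝ a) (hb : Differentiable ℝ b) (v p) :
    pd v (fun q => a q + b q) p = pd v a p + pd v b p := by
  unfold pd; rw [fderiv_fun_add (ha p) (hb p)]; rfl

theorem pd_sub {a b : E4 → ℝ} (ha : Differentiable ℝ a) (hb : Differentiable ℝ b) (v p) :
    pd v (fun q => a q - b q) p = pd v a p - pd v b p := by
  unfold pd; rw [fderiv_fun_sub (ha p) (hb p)]; rfl

theorem pd_mul {a b : E4 → ℝ} (ha : Differentiable ℝ a) (hb : Differentiable ℝ b) (v p) :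
    pd v (fun q => a q * b q) p = pd v a p * b p + a p * pd v b p := by
  unfold pd; rw [fderiv_fun_mul (ha p) (hb p)]; simp [mul_comm]; ring

theorem pd_const (c : ℝ) (v p) : pd v (fun _ : E4 => c) p = 0 := by
  unfold pd; simp

theorem pd_lam (v p) : pd v (fun q : E4 => q.2.2.2) p = v.2.2.2 := by
  unfold pd
  rw [show (fun q : E4 => q.2.2.2) = ((ContinuousLinearMap.snd ℝ ℝ ℝ).comp
    ((ContinuousLinearMap.snd ℝ ℝ (ℝ × ℝ)).comp (ContinuousLinearMap.snd ℝ ℝ (ℝ × ℝ × ℝ)))) from rfl,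
    ContinuousLinearMap.fderiv]
  rfl

theorem deriv_eq_pd1 {g : E4 → ℝ} (hg : Differentiable ℝ g) (x y t l : ℝ) :
    deriv (fun x' => g (x', y, t, l)) x = pd (1, 0, 0, 0) g (x, y, t, l) := by
  have h : HasDerivAt (fun x' : ℝ => (x', y, t, l)) ((1 : ℝ), (0 : ℝ), (0 : ℝ), (0 : ℝ)) x := by
    exact HasDerivAt.prodMk (hasDerivAt_id x) (hasDerivAt_const x ((y, t, l) : ℝ × ℝ × ℝ))
  exact ((hg (x, y, t, l)).hasFDerivAt.comp_hasDerivAt x h).deriv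

theorem deriv_eq_pd2 {g : E4 → ℝ} (hg : Differentiable ℝ g) (x y t l : ℝ) :
    deriv (fun y' => g (x, y', t, l)) y = pd (0, 1, 0, 0) g (x, y, t, l) := by
  have h : HasDerivAt (fun y' : ℝ => ((x, y', t, l) : E4)) (0, 1, 0, 0) y := by
    exact HasDerivAt.prodMk (hasDerivAt_const y x)
      (HasDerivAt.prodMk (hasDerivAt_id y) (hasDerivAt_const y ((t, l) : ℝ × ℝ)))
  exact ((hg (x, y, t, l)).hasFDerivAt.comp_hasDerivAt y h).deriv

theorem deriv_eq_pd3 {g : E4 → ℝ} (hg : Differentiable ℝ g) (x y t l : ℝ) :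
    deriv (fun t' => g (x, y, t', l)) t = pd (0, 0, 1, 0) g (x, y, t, l) := by
  have h : HasDerivAt (fun t' : ℝ => ((x, y, t', l) : E4)) (0, 0, 1, 0) t := by
    exact HasDerivAt.prodMk (hasDerivAt_const t x)
      (HasDerivAt.prodMk (hasDerivAt_const t y) (HasDerivAt.prodMk (hasDerivAt_id t) (hasDerivAt_const t l)))
  exact ((hg (x, y, t, l)).hasFDerivAt.comp_hasDerivAt t h).deriv

theorem deriv_eq_pd4 {g : E4 → ℝ} (hg : Differentiable ℝ g) (x y t l : ℝ) :
    deriv (fun l' => g (x, y, t, l')) l = pd (0, 0, 0, 1) g (x, y, t, l) := by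
  have h : HasDerivAt (fun l' : ℝ => ((x, y, t, l') : E4)) (0, 0, 0, 1) l := by
    exact HasDerivAt.prodMk (hasDerivAt_const l x)
      (HasDerivAt.prodMk (hasDerivAt_const l y) (HasDerivAt.prodMk (hasDerivAt_const l t) (hasDerivAt_id l)))
  exact ((hg (x, y, t, l)).hasFDerivAt.comp_hasDerivAt l h).deriv

noncomputable def Uu (u : ℝ → ℝ → ℝ → ℝ) : E4 → ℝ := fun p => u p.1 p.2.1 p.2.2.1

theorem Uu_contDiff {u : ℝ → ℝ → ℝ → ℝ}
    (hu : ContDiff ℝ (⊤ : ℕ∞) (fun p : ℝ × ℝ × ℝ => u p.1 p.2.1 p.2.2)) :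
    ContDiff ℝ (⊤ : ℕ∞) (Uu u) :=
  hu.comp (ContDiff.prodMk contDiff_fst (ContDiff.prodMk (ContDiff.comp contDiff_fst contDiff_snd)
    (ContDiff.comp contDiff_fst (ContDiff.comp contDiff_snd contDiff_snd))))

theorem pd_e4_Uu {u : ℝ → ℝ → ℝ → ℝ}
    (hu : ContDiff ℝ (⊤ : ℕ∞) (fun p : ℝ × ℝ × ℝ => u p.1 p.2.1 p.2.2)) (p : E4) :
    pd (0, 0, 0, 1) (Uu u) p = 0 := by
  obtain ⟨x, y, t, l⟩ := p
  rw [← deriv_eq_pd4 ((Uu_contDiff hu).differentiable (by simp)) x y t l]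
  simp [Uu]

@[fun_prop] theorem pd_contDiff' {g : E4 → ℝ} (hg : ContDiff ℝ (⊤ : ℕ∞) g) (v : E4) :
    ContDiff ℝ (⊤ : ℕ∞) (pd v g) := pd_smooth hg v

@[fun_prop] theorem pd_diff {g : E4 → ℝ} (hg : ContDiff ℝ (⊤ : ℕ∞) g) (v : E4) :
    Differentiable ℝ (pd v g) := (pd_smooth hg v).differentiable (by simp)

noncomputable def L1p (u : ℝ → ℝ → ℝ → ℝ) (G : E4 → ℝ) : E4 → ℝ := fun p =>
  pd (0,1,0,0) G p - p.2.2.2 * pd (1,0,0,0) G p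
    + 2 * pd (1,0,0,0) (Uu u) p * p.2.2.2 * pd (0,0,0,1) G p

noncomputable def L2p (u : ℝ → ℝ → ℝ → ℝ) (G : E4 → ℝ) : E4 → ℝ := fun p =>
  pd (0,0,1,0) G p + ((1/2 : ℝ) * (p.2.2.2 * p.2.2.2) + Uu u p * p.2.2.2) * pd (1,0,0,0) G p
    - (pd (1,0,0,0) (Uu u) p * p.2.2.2 + pd (0,1,0,0) (Uu u) p
        + 2 * Uu u p * pd (1,0,0,0) (Uu u) p) * p.2.2.2 * pd (0,0,0,1) G p

example {u : ℝ → ℝ → ℝ → ℝ} {G : E4 → ℝ}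
    (hu : ContDiff ℝ (⊤ : ℕ∞) (Uu u)) (hG : ContDiff ℝ (⊤ : ℕ∞) G) : ContDiff ℝ (⊤ : ℕ∞) (L1p u G) := by
  unfold L1p; fun_prop

example {u : ℝ → ℝ → ℝ → ℝ} {G : E4 → ℝ}
    (hu : ContDiff ℝ (⊤ : ℕ∞) (Uu u)) (hG : ContDiff ℝ (⊤ : ℕ∞) G) : ContDiff ℝ (⊤ : ℕ∞) (L2p u G) := by
  unfold L2p; fun_prop



theorem pd_lam_diff : Differentiable ℝ (fun q : E4 => q.2.2.2) := by fun_prop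

theorem L1_eq {u : ℝ → ℝ → ℝ → ℝ} {g : ℝ → ℝ → ℝ → ℝ → ℝ} {G : E4 → ℝ}
    (hu : ContDiff ℝ (⊤ : ℕ∞) (fun p : ℝ × ℝ × ℝ => u p.1 p.2.1 p.2.2))
    (hG : ContDiff ℝ (⊤ : ℕ∞) G) (hg : ∀ x y t l, g x y t l = G (x, y, t, l))
    (x y t l : ℝ) : L1 u g x y t l = L1p u G (x, y, t, l) := by
  have hd := hG.differentiable (by simp)
  have hU := (Uu_contDiff hu).differentiable (by simp)
  have h1 : (fun y' => g x y' t l) = fun y' => G (x, y', t, l) := funext fun y' => hg x y' t l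
  have h2 : (fun x' => g x' y t l) = fun x' => G (x', y, t, l) := funext fun x' => hg x' y t l
  have h3 : (fun l' => g x y t l') = fun l' => G (x, y, t, l') := funext fun l' => hg x y t l'
  have h4 : deriv (fun x' => u x' y t) x = pd (1, 0, 0, 0) (Uu u) (x, y, t, l) :=
    deriv_eq_pd1 hU x y t l
  unfold L1 L1p
  rw [h1, h2, h3, deriv_eq_pd1 hd, deriv_eq_pd2 hd, deriv_eq_pd4 hd, h4]

theorem L2_eq {u : ℝ → ℝ → ℝ → ℝ} {g : ℝ → ℝ → ℝ → ℝ → ℝ} {G : E4 → ℝ}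
    (hu : ContDiff ℝ (⊤ : ℕ∞) (fun p : ℝ × ℝ × ℝ => u p.1 p.2.1 p.2.2))
    (hG : ContDiff ℝ (⊤ : ℕ∞) G) (hg : ∀ x y t l, g x y t l = G (x, y, t, l))
    (x y t l : ℝ) : L2 u g x y t l = L2p u G (x, y, t, l) := by
  have hd := hG.differentiable (by simp)
  have hU := (Uu_contDiff hu).differentiable (by simp)
  have h2 : (fun x' => g x' y t l) = fun x' => G (x', y, t, l) := funext fun x' => hg x' y t l
  have h3 : (fun t' => g x y t' l) = fun t' => G (x, y, t', l) := funext fun t' => hg x y t' l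
  have h4 : (fun l' => g x y t l') = fun l' => G (x, y, t, l') := funext fun l' => hg x y t l'
  have h5 : deriv (fun x' => u x' y t) x = pd (1, 0, 0, 0) (Uu u) (x, y, t, l) :=
    deriv_eq_pd1 hU x y t l
  have h6 : deriv (fun y' => u x y' t) y = pd (0, 1, 0, 0) (Uu u) (x, y, t, l) :=
    deriv_eq_pd2 hU x y t l
  have h7 : u x y t = Uu u (x, y, t, l) := rfl
  unfold L2 L2p
  rw [h2, h3, h4, deriv_eq_pd1 hd, deriv_eq_pd3 hd, deriv_eq_pd4 hd, h5, h6, h7]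
  ring

theorem L1p_def (u : ℝ → ℝ → ℝ → ℝ) (G : E4 → ℝ) : L1p u G = fun p =>
    pd (0,1,0,0) G p - p.2.2.2 * pd (1,0,0,0) G p
      + 2 * pd (1,0,0,0) (Uu u) p * p.2.2.2 * pd (0,0,0,1) G p := rfl

theorem L2p_def (u : ℝ → ℝ → ℝ → ℝ) (G : E4 → ℝ) : L2p u G = fun p =>
    pd (0,0,1,0) G p + ((1/2 : ℝ) * (p.2.2.2 * p.2.2.2) + Uu u p * p.2.2.2) * pd (1,0,0,0) G p
      - (pd (1,0,0,0) (Uu u) p * p.2.2.2 + pd (0,1,0,0) (Uu u) p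
          + 2 * Uu u p * pd (1,0,0,0) (Uu u) p) * p.2.2.2 * pd (0,0,0,1) G p := rfl

theorem comm_key {u : ℝ → ℝ → ℝ → ℝ} {F : E4 → ℝ}
    (hu : ContDiff ℝ (⊤ : ℕ∞) (fun p : ℝ × ℝ × ℝ => u p.1 p.2.1 p.2.2))
    (hF : ContDiff ℝ (⊤ : ℕ∞) F) (p : E4) :
    L1p u (L2p u F) p - L2p u (L1p u F) p =
      -(p.2.2.2 * (2 * (pd (1,0,0,0) (Uu u) p * pd (0,1,0,0) (Uu u) p
          + Uu u p * pd (1,0,0,0) (pd (0,1,0,0) (Uu u)) p)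
        + pd (0,1,0,0) (pd (0,1,0,0) (Uu u)) p
        + 2 * pd (1,0,0,0) (pd (0,0,1,0) (Uu u)) p) * pd (0,0,0,1) F p) := by
  have hU : ContDiff ℝ (⊤ : ℕ∞) (Uu u) := Uu_contDiff hu
  have hFd : Differentiable ℝ F := hF.differentiable (by simp)
  have hUd : Differentiable ℝ (Uu u) := hU.differentiable (by simp)
  simp only [L1p_def, L2p_def]
  simp (disch := fun_prop) only [pd_add, pd_sub, pd_mul, pd_const, pd_lam]
  have z4 : pd (0,0,0,1) (Uu u) p = 0 := pd_e4_Uu hu p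
  have zfun : pd (0,0,0,1) (Uu u) = fun _ => (0 : ℝ) := funext (pd_e4_Uu hu)
  have z41 : pd (0,0,0,1) (pd (1,0,0,0) (Uu u)) p = 0 := by
    rw [pd_comm hU, zfun, pd_const]
  have z42 : pd (0,0,0,1) (pd (0,1,0,0) (Uu u)) p = 0 := by
    rw [pd_comm hU, zfun, pd_const]
  have hU21 : pd (0,1,0,0) (pd (1,0,0,0) (Uu u)) p = pd (1,0,0,0) (pd (0,1,0,0) (Uu u)) p :=
    pd_comm hU _ _ p
  have hU31 : pd (0,0,1,0) (pd (1,0,0,0) (Uu u)) p = pd (1,0,0,0) (pd (0,0,1,0) (Uu u)) p :=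
    pd_comm hU _ _ p
  have hF21 : pd (0,1,0,0) (pd (1,0,0,0) F) p = pd (1,0,0,0) (pd (0,1,0,0) F) p :=
    pd_comm hF _ _ p
  have hF31 : pd (0,0,1,0) (pd (1,0,0,0) F) p = pd (1,0,0,0) (pd (0,0,1,0) F) p :=
    pd_comm hF _ _ p
  have hF32 : pd (0,0,1,0) (pd (0,1,0,0) F) p = pd (0,1,0,0) (pd (0,0,1,0) F) p :=
    pd_comm hF _ _ p
  have hF41 : pd (0,0,0,1) (pd (1,0,0,0) F) p = pd (1,0,0,0) (pd (0,0,0,1) F) p :=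
    pd_comm hF _ _ p
  have hF42 : pd (0,0,0,1) (pd (0,1,0,0) F) p = pd (0,1,0,0) (pd (0,0,0,1) F) p :=
    pd_comm hF _ _ p
  have hF43 : pd (0,0,0,1) (pd (0,0,1,0) F) p = pd (0,0,1,0) (pd (0,0,0,1) F) p :=
    pd_comm hF _ _ p
  rw [z4, z41, z42, hU21, hU31, hF21, hF31, hF32, hF41, hF42, hF43]
  ring

theorem L1p_smooth {u : ℝ → ℝ → ℝ → ℝ} {G : E4 → ℝ}
    (hU : ContDiff ℝ (⊤ : ℕ∞) (Uu u)) (hG : ContDiff ℝ (⊤ : ℕ∞) G) : ContDiff ℝ (⊤ : ℕ∞) (L1p u G) := by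
  unfold L1p; fun_prop

theorem L2p_smooth {u : ℝ → ℝ → ℝ → ℝ} {G : E4 → ℝ}
    (hU : ContDiff ℝ (⊤ : ℕ∞) (Uu u)) (hG : ContDiff ℝ (⊤ : ℕ∞) G) : ContDiff ℝ (⊤ : ℕ∞) (L2p u G) := by
  unfold L2p; fun_prop

theorem EW_conv {u : ℝ → ℝ → ℝ → ℝ}
    (hu : ContDiff ℝ (⊤ : ℕ∞) (fun p : ℝ × ℝ × ℝ => u p.1 p.2.1 p.2.2)) (x y t l : ℝ) :
    2 * (deriv (fun x' => u x' y t) x * deriv (fun y' => u x y' t) y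
          + u x y t * deriv (fun x' => deriv (fun y' => u x' y' t) y) x)
      + deriv (fun y' => deriv (fun y'' => u x y'' t) y') y
      + 2 * deriv (fun x' => deriv (fun t' => u x' y t') t) x
    = 2 * (pd (1,0,0,0) (Uu u) (x,y,t,l) * pd (0,1,0,0) (Uu u) (x,y,t,l)
          + Uu u (x,y,t,l) * pd (1,0,0,0) (pd (0,1,0,0) (Uu u)) (x,y,t,l))
      + pd (0,1,0,0) (pd (0,1,0,0) (Uu u)) (x,y,t,l)
      + 2 * pd (1,0,0,0) (pd (0,0,1,0) (Uu u)) (x,y,t,l) := by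
  have hU : ContDiff ℝ (⊤ : ℕ∞) (Uu u) := Uu_contDiff hu
  have hUd : Differentiable ℝ (Uu u) := hU.differentiable (by simp)
  have d1 : deriv (fun x' => u x' y t) x = pd (1,0,0,0) (Uu u) (x,y,t,l) :=
    deriv_eq_pd1 hUd x y t l
  have d2 : deriv (fun y' => u x y' t) y = pd (0,1,0,0) (Uu u) (x,y,t,l) :=
    deriv_eq_pd2 hUd x y t l
  have exy : (fun x' => deriv (fun y' => u x' y' t) y)
      = fun x' => pd (0,1,0,0) (Uu u) (x',y,t,l) :=
    funext fun x' => deriv_eq_pd2 hUd x' y t l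
  have dxy : deriv (fun x' => deriv (fun y' => u x' y' t) y) x
      = pd (1,0,0,0) (pd (0,1,0,0) (Uu u)) (x,y,t,l) := by
    rw [exy]; exact deriv_eq_pd1 (pd_diff hU _) x y t l
  have eyy : (fun y' => deriv (fun y'' => u x y'' t) y')
      = fun y' => pd (0,1,0,0) (Uu u) (x,y',t,l) :=
    funext fun y' => deriv_eq_pd2 hUd x y' t l
  have dyy : deriv (fun y' => deriv (fun y'' => u x y'' t) y') y
      = pd (0,1,0,0) (pd (0,1,0,0) (Uu u)) (x,y,t,l) := by
    rw [eyy]; exact deriv_eq_pd2 (pd_diff hU _) x y t l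
  have ext : (fun x' => deriv (fun t' => u x' y t') t)
      = fun x' => pd (0,0,1,0) (Uu u) (x',y,t,l) :=
    funext fun x' => deriv_eq_pd3 hUd x' y t l
  have dxt : deriv (fun x' => deriv (fun t' => u x' y t') t) x
      = pd (1,0,0,0) (pd (0,0,1,0) (Uu u)) (x,y,t,l) := by
    rw [ext]; exact deriv_eq_pd1 (pd_diff hU _) x y t l
  rw [d1, d2, dxy, dyy, dxt]; rfl

/-- `L₁` and `L₂` commute on all smooth functions iff `u` satisfies
the dispersionless Einstein–Weyl equation `(u²)_{xy} + u_{yy} + 2u_{xt} = 0`,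
where `(u²)_{xy} = 2 (u_x u_y + u u_{xy})`. -/
theorem Lax_pair_commutes_iff_EinsteinWeyl
    (u : ℝ → ℝ → ℝ → ℝ)
    (hu : ContDiff ℝ (⊤ : ℕ∞) (fun p : ℝ × ℝ × ℝ => u p.1 p.2.1 p.2.2)) :
    (∀ f : ℝ → ℝ → ℝ → ℝ → ℝ,
        ContDiff ℝ (⊤ : ℕ∞) (fun p : ℝ × ℝ × ℝ × ℝ => f p.1 p.2.1 p.2.2.1 p.2.2.2) →
        ∀ x y t l : ℝ, L1 u (L2 u f) x y t l = L2 u (L1 u f) x y t l)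
      ↔ (∀ x y t : ℝ,
          2 * (deriv (fun x' => u x' y t) x * deriv (fun y' => u x y' t) y
                + u x y t * deriv (fun x' => deriv (fun y' => u x' y' t) y) x)
            + deriv (fun y' => deriv (fun y'' => u x y'' t) y') y
            + 2 * deriv (fun x' => deriv (fun t' => u x' y t') t) x = 0) := by
  have hU : ContDiff ℝ (⊤ : ℕ∞) (Uu u) := Uu_contDiff hu
  constructor
  · intro H x y t
    set F : E4 → ℝ := fun p => p.2.2.2 with hFdef
    have hF : ContDiff ℝ (⊤ : ℕ∞) F := by fun_prop
    set f : ℝ → ℝ → ℝ → ℝ → ℝ := fun _ _ _ l => l with hfdef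
    have hfF : ∀ x y t l : ℝ, f x y t l = F (x, y, t, l) := fun _ _ _ _ => rfl
    have hcomm := H f hF x y t 1
    have e1 : L1 u (L2 u f) x y t 1 = L1p u (L2p u F) (x, y, t, 1) :=
      L1_eq hu (L2p_smooth hU hF) (L2_eq hu hF hfF) x y t 1
    have e2 : L2 u (L1 u f) x y t 1 = L2p u (L1p u F) (x, y, t, 1) :=
      L2_eq hu (L1p_smooth hU hF) (L1_eq hu hF hfF) x y t 1
    have key := comm_key hu hF (x, y, t, 1)
    rw [← e1, ← e2, hcomm, sub_self] at key
    have hlam : pd (0,0,0,1) F (x,y,t,1) = 1 := pd_lam _ _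
    rw [hlam] at key
    simp only [] at key
    rw [EW_conv hu x y t 1]
    nlinarith [key]
  · intro hEW f hf x y t l
    set F : E4 → ℝ := fun p => f p.1 p.2.1 p.2.2.1 p.2.2.2 with hFdef
    have hF : ContDiff ℝ (⊤ : ℕ∞) F := hf
    have hfF : ∀ x y t l : ℝ, f x y t l = F (x, y, t, l) := fun _ _ _ _ => rfl
    have e1 : L1 u (L2 u f) x y t l = L1p u (L2p u F) (x, y, t, l) :=
      L1_eq hu (L2p_smooth hU hF) (L2_eq hu hF hfF) x y t l
    have e2 : L2 u (L1 u f) x y t l = L2p u (L1p u F) (x, y, t, l) :=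
      L2_eq hu (L1p_smooth hU hF) (L1_eq hu hF hfF) x y t l
    have key := comm_key hu hF (x, y, t, l)
    have hz : 2 * (pd (1,0,0,0) (Uu u) (x,y,t,l) * pd (0,1,0,0) (Uu u) (x,y,t,l)
          + Uu u (x,y,t,l) * pd (1,0,0,0) (pd (0,1,0,0) (Uu u)) (x,y,t,l))
        + pd (0,1,0,0) (pd (0,1,0,0) (Uu u)) (x,y,t,l)
        + 2 * pd (1,0,0,0) (pd (0,0,1,0) (Uu u)) (x,y,t,l) = 0 := by
      rw [← EW_conv hu x y t l]; exact hEW x y t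
    rw [e1, e2]
    have : (x,y,t,l).2.2.2 * (2 * (pd (1,0,0,0) (Uu u) (x,y,t,l) * pd (0,1,0,0) (Uu u) (x,y,t,l)
          + Uu u (x,y,t,l) * pd (1,0,0,0) (pd (0,1,0,0) (Uu u)) (x,y,t,l))
        + pd (0,1,0,0) (pd (0,1,0,0) (Uu u)) (x,y,t,l)
        + 2 * pd (1,0,0,0) (pd (0,0,1,0) (Uu u)) (x,y,t,l)) = 0 := by rw [hz]; ring
    rw [this] at key
    linarith [key]
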